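/- Let (𝔤, [·,·], P_𝔤) and (V, {·,·}, P_V) be Rota-Baxter Lie algebras of weight λ forming a matched pair of Rota-Baxter Lie algebras via actions ▷ : V×𝔤 → 𝔤 (left module action of V on 𝔤) and ⊲ : V×𝔤 → V (right module action of 𝔤 on V). Then the bicrossed product 𝔤 ⋈ V, which is 𝔤 × V with bracket [(g,x),(h,y)] = ([g,h] + x▷h − y▷g, {x,y} + x⊲h − y⊲g) and operator P̃(g,x) = (P_𝔤(g), P_V(x)), is a Rota-Baxter Lie algebra of weight λ. -/
import Mathlib


section Bicrossed

variable {k L M : Type*} [Field k] [LieRing L] [LieAlgebra k L]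
  [LieRing M] [LieAlgebra k M]

/-- The bracket of the bicrossed product `𝔤 ⋈ V`:
`[(g,x),(h,y)] = ([g,h] + x▷h − y▷g, {x,y} + x⊲h − y⊲g)`. -/
def bBr (tril : M →ₗ[k] L →ₗ[k] M) (trir : M →ₗ[k] L →ₗ[k] L) (p q : L × M) : L × M :=
  (⁅p.1, q.1⁆ + trir p.2 q.1 - trir q.2 p.1,
    ⁅p.2, q.2⁆ + tril p.2 q.1 - tril q.2 p.1)

/-- The operator of the bicrossed product: `P̃(g,x) = (P_𝔤(g), P_V(x))`. -/
def bP (P : L →ₗ[k] L) (PM : M →ₗ[k] M) (p : L × M) : L × M := (P p.1, PM p.2)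

end Bicrossed


private lemma jac3 {L : Type*} [LieRing L] (a b c : L) :
    ⁅⁅a, b⁆, c⁆ + ⁅⁅b, c⁆, a⁆ + ⁅⁅c, a⁆, b⁆ = 0 := by
  have h := lie_jacobi a b c
  rw [← lie_skew ⁅a, b⁆ c, ← lie_skew ⁅b, c⁆ a, ← lie_skew ⁅c, a⁆ b]
  rw [show (-⁅c, ⁅a, b⁆⁆ + -⁅a, ⁅b, c⁆⁆ + -⁅b, ⁅c, a⁆⁆ : L)
      = -(⁅a, ⁅b, c⁆⁆ + ⁅b, ⁅c, a⁆⁆ + ⁅c, ⁅a, b⁆⁆) from by abel, h, neg_zero]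

private lemma jac3' {L : Type*} [LieRing L] (a b c : L) :
    ⁅⁅a, b⁆, c⁆ = -⁅⁅b, c⁆, a⁆ - ⁅⁅c, a⁆, b⁆ := by
  apply eq_of_sub_eq_zero
  rw [show (⁅⁅a, b⁆, c⁆ - (-⁅⁅b, c⁆, a⁆ - ⁅⁅c, a⁆, b⁆) : L)
      = ⁅⁅a, b⁆, c⁆ + ⁅⁅b, c⁆, a⁆ + ⁅⁅c, a⁆, b⁆ from by abel]
  exact jac3 a b c

/-- The bicrossed product of a matched pair of Rota-Baxter Lie algebras is a
Rota-Baxter Lie algebra of weight `λ`. -/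
theorem bicrossed_product_is_rb_lie {k L M : Type*} [Field k] [LieRing L]
    [LieAlgebra k L] [LieRing M] [LieAlgebra k M] (lam : k)
    (P : L →ₗ[k] L) (PM : M →ₗ[k] M)
    (hP : ∀ g h : L, ⁅P g, P h⁆ = P (⁅P g, h⁆ + ⁅g, P h⁆ + lam • ⁅g, h⁆))
    (hPM : ∀ x y : M, ⁅PM x, PM y⁆ = PM (⁅PM x, y⁆ + ⁅x, PM y⁆ + lam • ⁅x, y⁆))
    (tril : M →ₗ[k] L →ₗ[k] M) (trir : M →ₗ[k] L →ₗ[k] L)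
    -- `V` is a right `𝔤`-module under `⊲`:
    (hright : ∀ (x : M) (g h : L), tril x ⁅g, h⁆ = tril (tril x g) h - tril (tril x h) g)
    -- `𝔤` is a left `V`-module under `▷`:
    (hleft : ∀ (x y : M) (g : L), trir ⁅x, y⁆ g = trir x (trir y g) - trir y (trir x g))
    -- matched pair compatibility:
    (hcomp1 : ∀ (x : M) (g h : L),
      trir x ⁅g, h⁆ = ⁅trir x g, h⁆ + ⁅g, trir x h⁆ + trir (tril x g) h - trir (tril x h) g)
    (hcomp2 : ∀ (x y : M) (g : L),
      tril ⁅x, y⁆ g = ⁅x, tril y g⁆ + ⁅tril x g, y⁆ + tril x (trir y g) - tril y (trir x g))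
    -- `(V, P_V)` is a right Rota-Baxter module over `(𝔤, P_𝔤)`:
    (hrmod : ∀ (x : M) (g : L),
      tril (PM x) (P g) = PM (tril x (P g) + tril (PM x) g + lam • tril x g))
    -- `(𝔤, P_𝔤)` is a left Rota-Baxter module over `(V, P_V)`:
    (hlmod : ∀ (x : M) (g : L),
      trir (PM x) (P g) = P (trir (PM x) g + trir x (P g) + lam • trir x g)) :
    (∀ p : L × M, bBr tril trir p p = 0) ∧
    (∀ p q r : L × M,
      bBr tril trir (bBr tril trir p q) r + bBr tril trir (bBr tril trir q r) p +
        bBr tril trir (bBr tril trir r p) q = 0) ∧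
    (∀ p q : L × M,
      bBr tril trir (bP P PM p) (bP P PM q) =
        bP P PM (bBr tril trir (bP P PM p) q + bBr tril trir p (bP P PM q) +
          lam • bBr tril trir p q)) := by

  have hflipL : ∀ (x : M) (a b : L), ⁅a, trir x b⁆ = -⁅trir x b, a⁆ :=
    fun x a b => (lie_skew a (trir x b)).symm
  have hflipM : ∀ (a : M) (x : M) (g : L), ⁅a, tril x g⁆ = -⁅tril x g, a⁆ :=
    fun a x g => (lie_skew a (tril x g)).symm
  refine ⟨?_, ?_, ?_⟩
  · intro p
    simp [bBr]
  · intro p q r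
    have e1 : (bBr tril trir (bBr tril trir p q) r + bBr tril trir (bBr tril trir q r) p +
        bBr tril trir (bBr tril trir r p) q).1 = 0 := by
      simp only [bBr, Prod.fst_add, Prod.snd_add, map_add, map_sub, LinearMap.add_apply,
        LinearMap.sub_apply, add_lie, sub_lie, lie_add, lie_sub, hcomp1, hleft, hflipL]
      rw [jac3' p.1 q.1 r.1]
      abel
    have e2 : (bBr tril trir (bBr tril trir p q) r + bBr tril trir (bBr tril trir q r) p +
        bBr tril trir (bBr tril trir r p) q).2 = 0 := by
      simp only [bBr, Prod.fst_add, Prod.snd_add, map_add, map_sub, LinearMap.add_apply,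
        LinearMap.sub_apply, add_lie, sub_lie, lie_add, lie_sub, hcomp2, hright, hflipM]
      rw [jac3' p.2 q.2 r.2]
      abel
    exact Prod.ext e1 e2
  · intro p q
    apply Prod.ext
    · simp only [bBr, bP, Prod.fst_add, Prod.snd_add, Prod.smul_fst, Prod.smul_snd,
        map_add, map_sub, map_smul, LinearMap.add_apply, LinearMap.sub_apply,
        LinearMap.smul_apply, hP, hlmod, smul_add, smul_sub]
      abel
    · simp only [bBr, bP, Prod.fst_add, Prod.snd_add, Prod.smul_fst, Prod.smul_snd,
        map_add, map_sub, map_smul, LinearMap.add_apply, LinearMap.sub_apply,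
        LinearMap.smul_apply, hPM, hrmod, smul_add, smul_sub]
      abel
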